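/- arXiv:2106.15337 — 4 statements merged into one kernel-verified Lean document; each statement's English description precedes it below -/
import Mathlib

section
/- Let P be a red d-neighbourly poset on m vertices with red bar set R, partitioned into d chains. Suppose for every chain U and every vertex x outside U, at most one neighbourly contraction in U creates a new red bar oriented from (the contracted vertex of) U to x, and at most one creates a new red bar oriented towards it from x. Then the red potential of P (the sum over all non-maximal chain vertices u of the number of red edges incident to the vertex obtained by contracting u with its chain successor) is at most 2(d−1)m + 4|R|. -/
open Finset

lemma sumRed {X : Type*} [Fintype X] [DecidableEq X] (R : Finset (Sym2 X)) :
    ∑ w : X, (univ.filter fun v => v ≠ w ∧ s(w, v) ∈ R).card ≤ 2 * R.card := by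
  classical
  set S : Finset (X × X) := univ.filter fun p => p.2 ≠ p.1 ∧ s(p.1, p.2) ∈ R with hS
  have hcard : ∑ w : X, (univ.filter fun v => v ≠ w ∧ s(w, v) ∈ R).card = S.card := by
    rw [Finset.card_eq_sum_card_fiberwise (f := Prod.fst) (t := univ) (fun p _ => mem_univ _)]
    refine Finset.sum_congr rfl fun w _ => ?_
    have : S.filter (fun p => p.1 = w) =
        (univ.filter fun v => v ≠ w ∧ s(w, v) ∈ R).map
          ⟨fun v => (w, v), fun a b h => congrArg Prod.snd h⟩ := by
      ext p
      simp only [hS, mem_filter, mem_univ, true_and, mem_map, Function.Embedding.coeFn_mk]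
      constructor
      · rintro ⟨⟨h1, h2⟩, rfl⟩
        exact ⟨p.2, ⟨h1, h2⟩, rfl⟩
      · rintro ⟨v, ⟨h1, h2⟩, rfl⟩
        exact ⟨⟨h1, h2⟩, rfl⟩
    rw [this, card_map]
  rw [hcard]
  have himage : S.image (fun p => s(p.1, p.2)) ⊆ R := by
    intro e he
    simp only [mem_image] at he
    obtain ⟨p, hp, rfl⟩ := he
    exact ((mem_filter.1 hp).2).2
  calc S.card ≤ 2 * (S.image (fun p => s(p.1, p.2))).card := by
        apply Finset.card_le_mul_card_image
        intro e he
        induction e using Sym2.ind with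
        | _ a b =>
          have hsub : S.filter (fun p => s(p.1, p.2) = s(a, b)) ⊆ {(a, b), (b, a)} := by
            intro p hp
            have h := (mem_filter.1 hp).2
            rw [Sym2.eq_iff] at h
            simp only [mem_insert, mem_singleton]
            rcases h with ⟨h1, h2⟩ | ⟨h1, h2⟩
            · exact Or.inl (Prod.ext h1 h2)
            · exact Or.inr (Prod.ext h1 h2)
          exact le_trans (card_le_card hsub) (le_trans (card_insert_le _ _) (by simp))
    _ ≤ 2 * R.card := Nat.mul_le_mul_left 2 (card_le_card himage)

lemma sumNew {X : Type*} [Fintype X] [DecidableEq X] (d : ℕ) (c : X → Fin d)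
    (NM : Finset X) (N : X → Finset X)
    (hcross : ∀ u ∈ NM, ∀ x ∈ N u, c x ≠ c u)
    (h1 : ∀ (i : Fin d) (x : X), c x ≠ i → (NM.filter fun u => c u = i ∧ x ∈ N u).card ≤ 1) :
    ∑ u ∈ NM, (N u).card ≤ (d - 1) * Fintype.card X := by
  classical
  have step1 : ∑ u ∈ NM, (N u).card = ∑ x : X, (NM.filter fun u => x ∈ N u).card := by
    have h : ∀ u, (N u).card = ∑ x : X, if x ∈ N u then 1 else 0 := by
      intro u
      rw [← Finset.card_filter]
      congr 1
      ext x; simp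
    simp_rw [h, Finset.card_filter]
    rw [Finset.sum_comm]
  rw [step1]
  have hx : ∀ x : X, (NM.filter fun u => x ∈ N u).card ≤ d - 1 := by
    intro x
    have hmem : ∀ u ∈ NM.filter fun u => x ∈ N u, c u ∈ univ.filter (· ≠ c x) := by
      intro u hu
      simp only [mem_filter, mem_univ, true_and] at hu ⊢
      exact fun h => hcross u hu.1 x hu.2 h.symm
    rw [Finset.card_eq_sum_card_fiberwise hmem]
    have hcard : (univ.filter (· ≠ c x)).card = d - 1 := by
      rw [Finset.filter_ne', Finset.card_erase_of_mem (mem_univ _), card_univ,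
        Fintype.card_fin]
    calc ∑ i ∈ univ.filter (· ≠ c x),
          ((NM.filter fun u => x ∈ N u).filter fun u => c u = i).card
        ≤ ∑ _i ∈ univ.filter (· ≠ c x), 1 := by
          refine Finset.sum_le_sum fun i hi => ?_
          have hi' : c x ≠ i := fun h => (mem_filter.1 hi).2 h.symm
          rw [Finset.filter_filter]
          exact le_trans (le_of_eq (congrArg Finset.card
            (Finset.filter_congr fun u _ => and_comm))) (h1 i x hi')
      _ = d - 1 := by rw [Finset.sum_const, smul_eq_mul, mul_one, hcard]
  calc ∑ x : X, (NM.filter fun u => x ∈ N u).card ≤ ∑ _x : X, (d - 1) :=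
        Finset.sum_le_sum fun x _ => hx x
    _ = (d - 1) * Fintype.card X := by rw [Finset.sum_const, smul_eq_mul, card_univ, mul_comm]


/-- Red-potential bound.  `X` is partitioned into `d` chains by `c`; `NM` is the set
of non-maximal chain vertices, `succ u` the chain successor of `u ∈ NM`; `R` is the
set of red bars.  The neighbourly contraction of `u` with `succ u` creates the new
red bars `NewFrom u` (oriented from the contracted vertex) and `NewTo u` (oriented
towards it), always to other chains.  Assume that for every chain `i` and every
vertex `x` outside chain `i`, at most one neighbourly contraction in chain `i`
creates a new red bar oriented to `x`, and at most one creates one oriented from `x`.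
Then the red potential of the structure — the sum over all non-maximal `u` of the
number of red edges incident to the contracted vertex (new ones together with
pre-existing red edges at `u` or `succ u`) — is at most `2(d−1)m + 4|R|`. -/
theorem stmt6 {X : Type*} [Fintype X] [DecidableEq X] (d : ℕ)
    (c : X → Fin d) (NM : Finset X) (succ : X → X)
    (hchain : ∀ u ∈ NM, c (succ u) = c u)
    (hne : ∀ u ∈ NM, succ u ≠ u)
    (hinj : ∀ u ∈ NM, ∀ v ∈ NM, succ u = succ v → u = v)
    (R : Finset (Sym2 X))
    (NewFrom NewTo : X → Finset X)
    (hcross : ∀ u ∈ NM, ∀ x ∈ NewFrom u ∪ NewTo u, c x ≠ c u)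
    (hFrom : ∀ (i : Fin d) (x : X), c x ≠ i →
      (NM.filter fun u => c u = i ∧ x ∈ NewFrom u).card ≤ 1)
    (hTo : ∀ (i : Fin d) (x : X), c x ≠ i →
      (NM.filter fun u => c u = i ∧ x ∈ NewTo u).card ≤ 1) :
    (∑ u ∈ NM, ((NewFrom u ∪ NewTo u).card +
      (Finset.univ.filter fun v => v ≠ u ∧ v ≠ succ u ∧
        (s(u, v) ∈ R ∨ s(succ u, v) ∈ R)).card))
      ≤ 2 * (d - 1) * Fintype.card X + 4 * R.card := by
  classical
  rw [Finset.sum_add_distrib]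
  set g : X → ℕ := fun w => (univ.filter fun v => v ≠ w ∧ s(w, v) ∈ R).card with hg
  -- new-bar part
  have hA : ∑ u ∈ NM, (NewFrom u ∪ NewTo u).card ≤ 2 * (d - 1) * Fintype.card X := by
    have h1 : ∑ u ∈ NM, (NewFrom u).card ≤ (d - 1) * Fintype.card X :=
      sumNew d c NM NewFrom
        (fun u hu x hx => hcross u hu x (mem_union_left _ hx)) hFrom
    have h2 : ∑ u ∈ NM, (NewTo u).card ≤ (d - 1) * Fintype.card X :=
      sumNew d c NM NewTo
        (fun u hu x hx => hcross u hu x (mem_union_right _ hx)) hTo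
    calc ∑ u ∈ NM, (NewFrom u ∪ NewTo u).card
        ≤ ∑ u ∈ NM, ((NewFrom u).card + (NewTo u).card) :=
          Finset.sum_le_sum fun u _ => card_union_le _ _
      _ = ∑ u ∈ NM, (NewFrom u).card + ∑ u ∈ NM, (NewTo u).card := Finset.sum_add_distrib
      _ ≤ (d - 1) * Fintype.card X + (d - 1) * Fintype.card X := Nat.add_le_add h1 h2
      _ = 2 * (d - 1) * Fintype.card X := by ring
  -- existing-red-bar part
  have hB : ∑ u ∈ NM, (Finset.univ.filter fun v => v ≠ u ∧ v ≠ succ u ∧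
      (s(u, v) ∈ R ∨ s(succ u, v) ∈ R)).card ≤ 4 * R.card := by
    have hsplit : ∀ u, (Finset.univ.filter fun v => v ≠ u ∧ v ≠ succ u ∧
        (s(u, v) ∈ R ∨ s(succ u, v) ∈ R)).card ≤ g u + g (succ u) := by
      intro u
      have hsub : (Finset.univ.filter fun v => v ≠ u ∧ v ≠ succ u ∧
          (s(u, v) ∈ R ∨ s(succ u, v) ∈ R)) ⊆
          (univ.filter fun v => v ≠ u ∧ s(u, v) ∈ R) ∪
          (univ.filter fun v => v ≠ succ u ∧ s(succ u, v) ∈ R) := by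
        intro v hv
        simp only [mem_filter, mem_univ, true_and, mem_union] at hv ⊢
        obtain ⟨h1, h2, h3 | h3⟩ := hv
        · exact Or.inl ⟨h1, h3⟩
        · exact Or.inr ⟨h2, h3⟩
      exact le_trans (card_le_card hsub) (card_union_le _ _)
    have hgu : ∑ u ∈ NM, g u ≤ 2 * R.card :=
      le_trans (Finset.sum_le_sum_of_subset (subset_univ NM)) (sumRed R)
    have hgs : ∑ u ∈ NM, g (succ u) ≤ 2 * R.card := by
      rw [← Finset.sum_image (g := succ) (f := g) (fun x hx y hy h => hinj x hx y hy h)]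
      exact le_trans (Finset.sum_le_sum_of_subset (subset_univ _)) (sumRed R)
    calc ∑ u ∈ NM, (Finset.univ.filter fun v => v ≠ u ∧ v ≠ succ u ∧
          (s(u, v) ∈ R ∨ s(succ u, v) ∈ R)).card
        ≤ ∑ u ∈ NM, (g u + g (succ u)) := Finset.sum_le_sum fun u _ => hsplit u
      _ = ∑ u ∈ NM, g u + ∑ u ∈ NM, g (succ u) := Finset.sum_add_distrib
      _ ≤ 2 * R.card + 2 * R.card := Nat.add_le_add hgu hgs
      _ = 4 * R.card := by ring
  exact Nat.add_le_add hA hB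
end

section
/- If a finite poset P has symmetric (matrix) twin-width d_s and natural twin-width d, then d ≤ d_s ≤ d + 1. -/
/-- All elements of block `B` lie below all elements of block `C`. -/
def blockLE {X : Type*} (le : X → X → Prop) (B C : Finset X) : Prop :=
  ∀ x ∈ B, ∀ y ∈ C, le x y

/-- Two blocks form a red pair (non-homogeneous zone between incomparable blocks):
neither block lies entirely below the other, yet some pair of elements is comparable. -/
def RedPair {X : Type*} (le : X → X → Prop) (B C : Finset X) : Prop :=
  ¬ blockLE le B C ∧ ¬ blockLE le C B ∧ ∃ x ∈ B, ∃ y ∈ C, le x y ∨ le y x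

open Classical in
/-- Red degree of the part `B` in the partition `P`. -/
noncomputable def redDeg {X : Type*} (le : X → X → Prop)
    (P : Finset (Finset X)) (B : Finset X) : ℕ :=
  (P.filter fun C => C ≠ B ∧ RedPair le B C).card

/-- `P` is a partition of the (finite) type `X` into nonempty parts. -/
def IsPartitionOf {X : Type*} (P : Finset (Finset X)) : Prop :=
  (∀ B ∈ P, B.Nonempty) ∧ ∀ x : X, ∃! B, B ∈ P ∧ x ∈ B

/-- `Q` is obtained from `P` by merging (contracting) two of its parts. -/
def MergeStep {X : Type*} [DecidableEq X] (P Q : Finset (Finset X)) : Prop :=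
  ∃ B ∈ P, ∃ C ∈ P, B ≠ C ∧ Q = insert (B ∪ C) ((P.erase B).erase C)

/-- The natural twin-width of the poset `(X, le)` is at most `d`: there is a
contraction sequence from the partition into singletons down to the one-part
partition, merging two parts at each step, whose red degree never exceeds `d`. -/
def NatTwinWidthLE {X : Type*} [Fintype X] [DecidableEq X]
    (le : X → X → Prop) (d : ℕ) : Prop :=
  ∃ (n : ℕ) (seq : Fin (n + 1) → Finset (Finset X)),
    (∀ i, IsPartitionOf (seq i)) ∧
    seq 0 = Finset.univ.image (fun x => ({x} : Finset X)) ∧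
    seq (Fin.last n) = {Finset.univ} ∧
    (∀ i : Fin n, MergeStep (seq i.castSucc) (seq i.succ)) ∧
    ∀ i, ∀ B ∈ seq i, redDeg le (seq i) B ≤ d

open Classical in
/-- The matrix `A_P` of a poset: entry `(u,v)` is `1` if `u ≤ v`, `-1` if `v < u`,
and `0` if `u` and `v` are incomparable. -/
noncomputable def entryM {X : Type*} [PartialOrder X] (x y : X) : ℤ :=
  if x ≤ y then 1 else if y ≤ x then -1 else 0

/-- The zone `B × C` of the matrix `A_P` is constant. -/
def ZoneConstant {X : Type*} [PartialOrder X] (B C : Finset X) : Prop :=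
  ∀ x ∈ B, ∀ x' ∈ B, ∀ y ∈ C, ∀ y' ∈ C, entryM x y = entryM x' y'

open Classical in
/-- The error value of the row `B` in the partitioned matrix: the number of
non-constant zones `B × C` over parts `C` (including `C = B`). -/
noncomputable def rowErr {X : Type*} [PartialOrder X]
    (P : Finset (Finset X)) (B : Finset X) : ℕ :=
  (P.filter fun C => ¬ ZoneConstant B C).card

open Classical in
/-- The error value of the column `B`: the number of non-constant zones `C × B`. -/
noncomputable def colErr {X : Type*} [PartialOrder X]
    (P : Finset (Finset X)) (B : Finset X) : ℕ :=
  (P.filter fun C => ¬ ZoneConstant C B).card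

/-- The symmetric (matrix) twin-width of the poset `X` is at most `d`. -/
def SymTwinWidthLE (X : Type*) [PartialOrder X] [Fintype X] [DecidableEq X]
    (d : ℕ) : Prop :=
  ∃ (n : ℕ) (seq : Fin (n + 1) → Finset (Finset X)),
    (∀ i, IsPartitionOf (seq i)) ∧
    seq 0 = Finset.univ.image (fun x => ({x} : Finset X)) ∧
    seq (Fin.last n) = {Finset.univ} ∧
    (∀ i : Fin n, MergeStep (seq i.castSucc) (seq i.succ)) ∧
    ∀ i, ∀ B ∈ seq i, rowErr (seq i) B ≤ d ∧ colErr (seq i) B ≤ d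

lemma nonconst_of_redPair {X : Type*} [PartialOrder X] {B C : Finset X}
    (h : RedPair (· ≤ ·) B C) : ¬ ZoneConstant B C := by
  obtain ⟨h1, h2, a, ha, b, hb, hab⟩ := h
  simp only [blockLE, not_forall] at h1 h2
  obtain ⟨x, hx, y, hy, hxy⟩ := h1
  obtain ⟨y', hy', x', hx', hyx'⟩ := h2
  intro hz
  have e1 := hz x hx x' hx' y hy y' hy'
  have e3 := hz a ha x hx b hb y hy
  rcases hab with hab | hab
  · simp only [entryM, if_pos hab, if_neg hxy] at e3
    split_ifs at e3 <;> omega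
  · simp only [entryM, if_neg hxy, if_neg hyx', if_pos hab] at e1 e3
    split_ifs at e1 e3 <;> omega

lemma parts_disjoint {X : Type*} {P : Finset (Finset X)} (hP : IsPartitionOf P)
    {B C : Finset X} (hB : B ∈ P) (hC : C ∈ P) (h : B ≠ C) : Disjoint B C := by
  rw [Finset.disjoint_left]
  intro x hxB hxC
  obtain ⟨D, _, hu⟩ := hP.2 x
  exact h ((hu B ⟨hB, hxB⟩).trans (hu C ⟨hC, hxC⟩).symm)

lemma redPair_of_nonconst {X : Type*} [PartialOrder X] {B C : Finset X}
    (hd : Disjoint B C) (h : ¬ ZoneConstant B C) : RedPair (· ≤ ·) B C := by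
  by_contra hr
  apply h
  rw [RedPair] at hr
  push_neg at hr
  by_cases h1 : blockLE (· ≤ ·) B C
  · intro x hx x' hx' y hy y' hy'
    simp [entryM, h1 x hx y hy, h1 x' hx' y' hy']
  by_cases h2 : blockLE (· ≤ ·) C B
  · intro x hx x' hx' y hy y' hy'
    have hyx := h2 y hy x hx
    have hyx' := h2 y' hy' x' hx'
    have hnxy : ¬ x ≤ y := fun hxy =>
      Finset.disjoint_left.mp hd hx ((le_antisymm hxy hyx) ▸ hy)
    have hnxy' : ¬ x' ≤ y' := fun hxy =>
      Finset.disjoint_left.mp hd hx' ((le_antisymm hxy hyx') ▸ hy')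
    simp [entryM, hnxy, hyx, hnxy', hyx']
  · have h3 := hr h1 h2
    intro x hx x' hx' y hy y' hy'
    obtain ⟨hxy, hyx⟩ := h3 x hx y hy
    obtain ⟨hxy', hyx'⟩ := h3 x' hx' y' hy'
    simp [entryM, hxy, hyx, hxy', hyx']

lemma redDeg_le_rowErr {X : Type*} [PartialOrder X]
    (P : Finset (Finset X)) (B : Finset X) :
    redDeg (· ≤ ·) P B ≤ rowErr P B := by
  classical
  apply Finset.card_le_card
  intro C hC
  simp only [Finset.mem_filter] at hC ⊢
  exact ⟨hC.1, nonconst_of_redPair hC.2.2⟩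

lemma rowErr_le {X : Type*} [PartialOrder X] {P : Finset (Finset X)}
    (hP : IsPartitionOf P) {B : Finset X} (hB : B ∈ P) :
    rowErr P B ≤ redDeg (· ≤ ·) P B + 1 := by
  classical
  have hsub : P.filter (fun C => ¬ ZoneConstant B C) ⊆
      insert B (P.filter fun C => C ≠ B ∧ RedPair (· ≤ ·) B C) := by
    intro C hC
    simp only [Finset.mem_filter, Finset.mem_insert] at hC ⊢
    by_cases h : C = B
    · exact Or.inl h
    · exact Or.inr ⟨hC.1, h,
        redPair_of_nonconst (parts_disjoint hP hB hC.1 (fun h' => h h'.symm)) hC.2⟩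
  calc (P.filter fun C => ¬ ZoneConstant B C).card
      ≤ (insert B (P.filter fun C => C ≠ B ∧ RedPair (· ≤ ·) B C)).card :=
        Finset.card_le_card hsub
    _ ≤ (P.filter fun C => C ≠ B ∧ RedPair (· ≤ ·) B C).card + 1 :=
        Finset.card_insert_le _ _

lemma redPair_symm {X : Type*} {le : X → X → Prop} {B C : Finset X}
    (h : RedPair le B C) : RedPair le C B := by
  obtain ⟨h1, h2, x, hx, y, hy, hxy⟩ := h
  exact ⟨h2, h1, y, hy, x, hx, hxy.symm⟩

lemma colErr_le {X : Type*} [PartialOrder X] {P : Finset (Finset X)}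
    (hP : IsPartitionOf P) {B : Finset X} (hB : B ∈ P) :
    colErr P B ≤ redDeg (· ≤ ·) P B + 1 := by
  classical
  have hsub : P.filter (fun C => ¬ ZoneConstant C B) ⊆
      insert B (P.filter fun C => C ≠ B ∧ RedPair (· ≤ ·) B C) := by
    intro C hC
    simp only [Finset.mem_filter, Finset.mem_insert] at hC ⊢
    by_cases h : C = B
    · exact Or.inl h
    · exact Or.inr ⟨hC.1, h,
        redPair_symm (redPair_of_nonconst (parts_disjoint hP hC.1 hB h) hC.2)⟩
  calc (P.filter fun C => ¬ ZoneConstant C B).card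
      ≤ (insert B (P.filter fun C => C ≠ B ∧ RedPair (· ≤ ·) B C)).card :=
        Finset.card_le_card hsub
    _ ≤ (P.filter fun C => C ≠ B ∧ RedPair (· ≤ ·) B C).card + 1 :=
        Finset.card_insert_le _ _

lemma redDeg_le_colErr {X : Type*} [PartialOrder X]
    (P : Finset (Finset X)) (B : Finset X) :
    redDeg (· ≤ ·) P B ≤ colErr P B := by
  classical
  apply Finset.card_le_card
  intro C hC
  simp only [Finset.mem_filter] at hC ⊢
  exact ⟨hC.1, fun hz => nonconst_of_redPair (redPair_symm hC.2.2) hz⟩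

/-- If a finite poset has symmetric (matrix) twin-width `ds` and natural twin-width
`d`, then `d ≤ ds ≤ d + 1`. -/
theorem stmt11 {X : Type*} [PartialOrder X] [Fintype X] [DecidableEq X] [Nonempty X]
    (ds d : ℕ)
    (hds : SymTwinWidthLE X ds ∧ ∀ e, SymTwinWidthLE X e → ds ≤ e)
    (hd : NatTwinWidthLE (· ≤ ·) (X := X) d ∧
      ∀ e, NatTwinWidthLE (· ≤ ·) (X := X) e → d ≤ e) :
    d ≤ ds ∧ ds ≤ d + 1 := by
  constructor
  · obtain ⟨⟨n, seq, hpart, h0, hlast, hmerge, hbound⟩, _⟩ := hds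
    exact hd.2 ds ⟨n, seq, hpart, h0, hlast, hmerge, fun i B hB =>
      le_trans (redDeg_le_rowErr _ _) (hbound i B hB).1⟩
  · obtain ⟨⟨m, seq, hpart, h0, hlast, hmerge, hbound⟩, _⟩ := hd
    exact hds.2 (d + 1) ⟨m, seq, hpart, h0, hlast, hmerge, fun i B hB =>
      ⟨le_trans (rowErr_le (hpart i) hB) (Nat.add_le_add_right (hbound i B hB) 1),
       le_trans (colErr_le (hpart i) hB) (Nat.add_le_add_right (hbound i B hB) 1)⟩⟩
end

section
/- For every integer d ≥ 2 there exists a finite poset of width d whose natural twin-width is at least d − 1. -/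
set_option linter.unreachableTactic false
set_option linter.unusedTactic false
def Red {d : ℕ} (x y z : Fin (d+1) × Fin d) : Prop :=
  ¬(x ≤ z ∧ y ≤ z) ∧ ¬(z ≤ x ∧ z ≤ y) ∧ (x ≤ z ∨ z ≤ x ∨ y ≤ z ∨ z ≤ y)

instance {d : ℕ} (x y z : Fin (d+1) × Fin d) : Decidable (Red x y z) := by
  unfold Red; infer_instance

open Finset in
lemma key' (d : ℕ) (a b : Fin (d+1)) (i j : Fin d)
    (h : i.val < j.val ∨ (i.val = j.val ∧ a.val < b.val)) :
    d - 1 ≤ (Finset.univ.filter fun z : Fin (d+1) × Fin d =>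
      z ≠ (a,i) ∧ z ≠ (b,j) ∧ Red (a,i) (b,j) z).card := by
  classical
  rcases lt_trichotomy a.val b.val with hab | hab | hab
  · -- case AC : a < b, i ≤ j
    have hij : i.val ≤ j.val := by omega
    have := Finset.card_le_card_of_injOn
      (f := fun t : Fin d => if i.val < t.val then ((a,t) : Fin (d+1) × Fin d) else (b,t))
      (s := Finset.univ.erase i)
      (t := Finset.univ.filter fun z : Fin (d+1) × Fin d =>
        z ≠ (a,i) ∧ z ≠ (b,j) ∧ Red (a,i) (b,j) z)
      (by
        intro t ht
        have ht' : t ≠ i := (Finset.mem_erase.mp ht).1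
        have ht'' : t.val ≠ i.val := fun h => ht' (Fin.ext h)
        dsimp only
        split_ifs with hcase <;>
          simp only [Red, Finset.mem_coe, Finset.mem_filter, Finset.mem_univ, true_and, ne_eq,
            Prod.mk.injEq, Prod.mk_le_mk, Fin.le_def, Fin.lt_def, Fin.ext_iff,
            not_and, not_or] <;>
          constructor <;> omega)
      (by
        intro t ht s hs hfs
        dsimp only at hfs
        split_ifs at hfs <;>
          simp only [Prod.mk.injEq, Fin.ext_iff] at hfs <;>
          [exact Fin.ext hfs.2; omega; omega; exact Fin.ext hfs.2])
    calc d - 1 = (Finset.univ.erase i).card := by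
          rw [Finset.card_erase_of_mem (Finset.mem_univ i)]; simp
      _ ≤ _ := this

  · -- a = b, i < j
    have hij : i.val < j.val := by omega
    have := Finset.card_le_card_of_injOn
      (f := fun r : Fin (d+1) => if a.val < r.val then ((r,i) : Fin (d+1) × Fin d) else (r,j))
      (s := Finset.univ.erase a)
      (t := Finset.univ.filter fun z : Fin (d+1) × Fin d =>
        z ≠ (a,i) ∧ z ≠ (b,j) ∧ Red (a,i) (b,j) z)
      (by
        intro r hr
        have hr'' : r.val ≠ a.val := fun h => (Finset.mem_erase.mp hr).1 (Fin.ext h)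
        dsimp only
        split_ifs with hcase <;>
          simp only [Red, Finset.mem_coe, Finset.mem_filter, Finset.mem_univ, true_and, ne_eq,
            Prod.mk.injEq, Prod.mk_le_mk, Fin.le_def, Fin.lt_def, Fin.ext_iff,
            not_and, not_or] <;>
          constructor <;> omega)
      (by
        intro t ht s hs hfs
        dsimp only at hfs
        split_ifs at hfs <;>
          simp only [Prod.mk.injEq, Fin.ext_iff] at hfs <;>
          first | (exact Fin.ext hfs.1) | omega)
    calc d - 1 ≤ (Finset.univ.erase a).card := by
          rw [Finset.card_erase_of_mem (Finset.mem_univ a)]; simp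
      _ ≤ _ := this

  · -- b < a, so i < j
    have hij : i.val < j.val := by omega
    have hba : b ≠ a := fun h => by omega
    have := Finset.card_le_card_of_injOn
      (f := fun r : Fin (d+1) => if a.val < r.val then ((r,i) : Fin (d+1) × Fin d) else (r,j))
      (s := (Finset.univ.erase a).erase b)
      (t := Finset.univ.filter fun z : Fin (d+1) × Fin d =>
        z ≠ (a,i) ∧ z ≠ (b,j) ∧ Red (a,i) (b,j) z)
      (by
        intro r hr
        have h1 : r ≠ b := (Finset.mem_erase.mp hr).1
        have h2 : r ≠ a := (Finset.mem_erase.mp (Finset.mem_erase.mp hr).2).1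
        have h1' : r.val ≠ b.val := fun h => h1 (Fin.ext h)
        have h2' : r.val ≠ a.val := fun h => h2 (Fin.ext h)
        dsimp only
        split_ifs with hcase <;>
          simp only [Red, Finset.mem_coe, Finset.mem_filter, Finset.mem_univ, true_and, ne_eq,
            Prod.mk.injEq, Prod.mk_le_mk, Fin.le_def, Fin.lt_def, Fin.ext_iff,
            not_and, not_or] <;>
          constructor <;> omega)
      (by
        intro t ht s hs hfs
        dsimp only at hfs
        split_ifs at hfs <;>
          simp only [Prod.mk.injEq, Fin.ext_iff] at hfs <;>
          first | (exact Fin.ext hfs.1) | omega)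
    calc d - 1 ≤ ((Finset.univ.erase a).erase b).card := by
          rw [Finset.card_erase_of_mem (Finset.mem_erase.mpr ⟨hba, Finset.mem_univ b⟩),
            Finset.card_erase_of_mem (Finset.mem_univ a)]
          simp
      _ ≤ _ := this


lemma keyCard (d : ℕ) (x y : Fin (d+1) × Fin d) (hxy : x ≠ y) :
    d - 1 ≤ (Finset.univ.filter fun z : Fin (d+1) × Fin d =>
      z ≠ x ∧ z ≠ y ∧ Red x y z).card := by
  obtain ⟨a, i⟩ := x
  obtain ⟨b, j⟩ := y
  have hswap : (Finset.univ.filter fun z : Fin (d+1) × Fin d =>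
      z ≠ (a,i) ∧ z ≠ (b,j) ∧ Red (a,i) (b,j) z) =
      (Finset.univ.filter fun z : Fin (d+1) × Fin d =>
      z ≠ (b,j) ∧ z ≠ (a,i) ∧ Red (b,j) (a,i) z) := by
    ext z
    simp only [Finset.mem_filter, Finset.mem_univ, true_and]
    unfold Red
    tauto
  rcases lt_trichotomy i.val j.val with hij | hij | hij
  · exact key' d a b i j (Or.inl hij)
  · have hne : a ≠ b := by
      intro h; exact hxy (by rw [h, Fin.ext_iff.mpr hij])
    rcases lt_trichotomy a.val b.val with hab | hab | hab
    · exact key' d a b i j (Or.inr ⟨hij, hab⟩)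
    · exact absurd (Fin.ext hab) hne
    · rw [hswap]; exact key' d b a j i (Or.inr ⟨hij.symm, hab⟩)
  · rw [hswap]; exact key' d b a j i (Or.inl hij)


lemma key (d : ℕ) (x y : Fin (d+1) × Fin d) (hxy : x ≠ y) :
    ∃ S : Finset (Fin (d+1) × Fin d), d - 1 ≤ S.card ∧
      ∀ z ∈ S, z ≠ x ∧ z ≠ y ∧ Red x y z := by
  refine ⟨Finset.univ.filter fun z : Fin (d+1) × Fin d =>
      z ≠ x ∧ z ≠ y ∧ Red x y z, keyCard d x y hxy, ?_⟩
  intro z hz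
  exact (Finset.mem_filter.mp hz).2



/-- For every `d ≥ 2` there exists a finite poset of width exactly `d`
whose natural twin-width is at least `d − 1` (i.e. not at most `d − 2`). -/
theorem stmt12 (d : ℕ) (hd : 2 ≤ d) :
    ∃ (n : ℕ) (le : Fin n → Fin n → Prop),
      IsPartialOrder (Fin n) le ∧
      (∀ A : Finset (Fin n),
        (∀ x ∈ A, ∀ y ∈ A, x ≠ y → ¬ le x y ∧ ¬ le y x) → A.card ≤ d) ∧
      (∃ A : Finset (Fin n),
        (∀ x ∈ A, ∀ y ∈ A, x ≠ y → ¬ le x y ∧ ¬ le y x) ∧ A.card = d) ∧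
      ¬ NatTwinWidthLE le (d - 2) := by
  classical
  set e : Fin ((d+1)*d) ≃ Fin (d+1) × Fin d := finProdFinEquiv.symm with he
  refine ⟨(d+1)*d, fun u v => e u ≤ e v, ?_, ?_, ?_, ?_⟩
  · exact { refl := fun u => le_refl _,
            trans := fun u v w h1 h2 => le_trans h1 h2,
            antisymm := fun u v h1 h2 => e.injective (le_antisymm h1 h2) }
  · -- width ≤ d
    intro A hA
    have : A.card ≤ (Finset.univ : Finset (Fin d)).card := by
      apply Finset.card_le_card_of_injOn (fun z => (e z).2)
      · intro z _; exact Finset.mem_univ _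
      · intro z hz w hw hzw
        by_contra hne
        rcases le_total (e z).1 (e w).1 with h1 | h1
        · exact (hA z hz w hw hne).1 ⟨h1, le_of_eq hzw⟩
        · exact (hA z hz w hw hne).2 ⟨h1, le_of_eq hzw.symm⟩
    simpa using this
  · -- antichain of size d
    refine ⟨Finset.image (fun t : Fin d =>
      e.symm (⟨d - 1 - t.val, by omega⟩, t)) Finset.univ, ?_, ?_⟩
    · intro x hx y hy hxy
      simp only [Finset.mem_image, Finset.mem_univ, true_and] at hx hy
      obtain ⟨t, rfl⟩ := hx
      obtain ⟨s, rfl⟩ := hy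
      have hts : t.val ≠ s.val := by
        intro h; exact hxy (by rw [Fin.ext h])
      constructor <;>
      · simp only [Equiv.apply_symm_apply, Prod.mk_le_mk, Fin.le_def]
        intro hc
        have ht := t.isLt
        have hs := s.isLt
        omega
    · rw [Finset.card_image_of_injective _ ?_, Finset.card_univ, Fintype.card_fin]
      intro t s h
      have := e.symm.injective h
      simpa [Prod.mk.injEq] using (Prod.ext_iff.mp this).2
  · -- twin-width lower bound
    rintro ⟨m, seq, hpart, h0, hlast, hmerge, hbound⟩
    have hn2 : 2 ≤ (d+1)*d := by nlinarith
    have hm : 0 < m := by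
      by_contra hm
      have hm0 : m = 0 := by omega
      subst hm0
      have : seq 0 = seq (Fin.last 0) := rfl
      rw [h0, hlast] at this
      have h1 : ({(⟨0, by omega⟩ : Fin ((d+1)*d))} : Finset _) ∈
          ({(Finset.univ : Finset (Fin ((d+1)*d)))} : Finset _) := by
        rw [← this]; exact Finset.mem_image_of_mem _ (Finset.mem_univ _)
      have h2 : ({(⟨1, by omega⟩ : Fin ((d+1)*d))} : Finset _) ∈
          ({(Finset.univ : Finset (Fin ((d+1)*d)))} : Finset _) := by
        rw [← this]; exact Finset.mem_image_of_mem _ (Finset.mem_univ _)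
      rw [Finset.mem_singleton] at h1 h2
      have : (⟨0, by omega⟩ : Fin ((d+1)*d)) = ⟨1, by omega⟩ :=
        Finset.singleton_injective (h1.trans h2.symm)
      simp [Fin.ext_iff] at this
    set i0 : Fin m := ⟨0, hm⟩ with hi0
    have hcast : i0.castSucc = (0 : Fin (m+1)) := rfl
    obtain ⟨B, hB, C, hC, hBC, hQ⟩ := hmerge i0
    rw [hcast, h0] at hB hC
    obtain ⟨x, -, rfl⟩ := Finset.mem_image.mp hB
    obtain ⟨y, -, rfl⟩ := Finset.mem_image.mp hC
    have hxy : x ≠ y := fun h => hBC (by rw [h])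
    set M : Finset (Fin ((d+1)*d)) := {x} ∪ {y} with hM
    have hMQon : M ∈ seq i0.succ := by rw [hQ]; exact Finset.mem_insert_self _ _
    have hub := hbound i0.succ M hMQon
    -- lower bound on redDeg
    have hexy : e x ≠ e y := fun h => hxy (e.injective h)
    obtain ⟨S, hScard, hSmem⟩ := key d (e x) (e y) hexy
    have hlow : d - 1 ≤ redDeg (fun u v => e u ≤ e v) (seq i0.succ) M := by
      unfold redDeg
      refine le_trans hScard (Finset.card_le_card_of_injOn
        (fun w => ({e.symm w} : Finset (Fin ((d+1)*d)))) ?_ ?_)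
      · intro w hw
        obtain ⟨hwx, hwy, hr1, hr2, hr3⟩ := hSmem w hw
        have hzx : e.symm w ≠ x := fun h => hwx (by rw [← h, Equiv.apply_symm_apply])
        have hzy : e.symm w ≠ y := fun h => hwy (by rw [← h, Equiv.apply_symm_apply])
        simp only [Finset.mem_coe, Finset.mem_filter]
        refine ⟨?_, ?_, ?_, ?_, ?_⟩
        · rw [hQ]
          apply Finset.mem_insert_of_mem
          rw [hcast, h0]
          refine Finset.mem_erase.mpr ⟨fun h => hzy (Finset.singleton_injective h), ?_⟩
          refine Finset.mem_erase.mpr ⟨fun h => hzx (Finset.singleton_injective h), ?_⟩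
          exact Finset.mem_image_of_mem _ (Finset.mem_univ _)
        · intro h
          apply hzx
          have hx : x ∈ M := Finset.mem_union_left _ (Finset.mem_singleton_self x)
          rw [← h] at hx
          exact (Finset.mem_singleton.mp hx).symm
        · intro hb
          refine hr1 ⟨?_, ?_⟩
          · have := hb x (Finset.mem_union_left _ (Finset.mem_singleton_self x))
              (e.symm w) (Finset.mem_singleton_self _)
            simpa only [Equiv.apply_symm_apply] using this
          · have := hb y (Finset.mem_union_right _ (Finset.mem_singleton_self y))
              (e.symm w) (Finset.mem_singleton_self _)
            simpa only [Equiv.apply_symm_apply] using this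
        · intro hb
          refine hr2 ⟨?_, ?_⟩
          · have := hb (e.symm w) (Finset.mem_singleton_self _)
              x (Finset.mem_union_left _ (Finset.mem_singleton_self x))
            simpa only [Equiv.apply_symm_apply] using this
          · have := hb (e.symm w) (Finset.mem_singleton_self _)
              y (Finset.mem_union_right _ (Finset.mem_singleton_self y))
            simpa only [Equiv.apply_symm_apply] using this
        · rcases hr3 with h | h | h | h
          · exact ⟨x, Finset.mem_union_left _ (Finset.mem_singleton_self x),
              e.symm w, Finset.mem_singleton_self _,
              Or.inl (by simpa only [Equiv.apply_symm_apply] using h)⟩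
          · exact ⟨x, Finset.mem_union_left _ (Finset.mem_singleton_self x),
              e.symm w, Finset.mem_singleton_self _,
              Or.inr (by simpa only [Equiv.apply_symm_apply] using h)⟩
          · exact ⟨y, Finset.mem_union_right _ (Finset.mem_singleton_self y),
              e.symm w, Finset.mem_singleton_self _,
              Or.inl (by simpa only [Equiv.apply_symm_apply] using h)⟩
          · exact ⟨y, Finset.mem_union_right _ (Finset.mem_singleton_self y),
              e.symm w, Finset.mem_singleton_self _,
              Or.inr (by simpa only [Equiv.apply_symm_apply] using h)⟩
      · intro w _ w' _ h
        exact e.symm.injective (Finset.singleton_injective h)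
    omega
end

section
/- Let P be a red d-neighbourly poset obtained from a chain-partitioned poset P0, with red bars oriented as in the paper. If (u,v) is an oriented red bar with u in chain U and v in chain V, and the pair {u, v^+} (v^+ the successor of v in V) is not red with orientation (u,v^+), then u ≤ v^+ in P. (Red bars oriented from u into V form a consecutive strip capped by a black bar.) -/
/-- `m` is the least element of the finite set `s` with respect to `le`. -/
def IsLeastIn {X : Type*} (le : X → X → Prop) (m : X) (s : Finset X) : Prop :=
  m ∈ s ∧ ∀ x ∈ s, le m x

/-- `m` is the greatest element of the finite set `s` with respect to `le`. -/
def IsGreatestIn {X : Type*} (le : X → X → Prop) (m : X) (s : Finset X) : Prop :=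
  m ∈ s ∧ ∀ x ∈ s, le x m

/-- The pair `{B, C}` is a red bar oriented from `B` to `C`, where `mB`, `mC` are
the minima of the blocks `B`, `C`: the pair is red, `min B` is below some element
of `C`, and `min C` is not below `min B`. -/
def OrientedRed {X : Type*} (le : X → X → Prop) (B C : Finset X) (mB mC : X) : Prop :=
  RedPair le B C ∧ (∃ x ∈ C, le mB x) ∧ ¬ le mC mB

/-- Red bars oriented from `u` into a chain come in a consecutive strip capped by a
black bar: if `(u, v)` is an oriented red bar and the pair `{u, v⁺}` (with `v⁺` the
successor of `v` in its chain, so `v ≤ v⁺` blockwise and `v ≠ v⁺`) is not a red bar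
oriented from `u`, then `u ≤ v⁺` blockwise. -/
theorem stmt15 {X0 : Type*} (le0 : X0 → X0 → Prop)
    (hpo : IsPartialOrder X0 le0)
    (u v v' : Finset X0) (mu Mu mv mv' : X0)
    (hu : u.Nonempty) (hv : v.Nonempty) (hv' : v'.Nonempty)
    (hmu : IsLeastIn le0 mu u) (hMu : IsGreatestIn le0 Mu u)
    (hmv : IsLeastIn le0 mv v) (hmv' : IsLeastIn le0 mv' v')
    (hsucc : blockLE le0 v v') (hne : v ≠ v')
    (hbar : OrientedRed le0 u v mu mv)
    (hnot : ¬ OrientedRed le0 u v' mu mv') :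
    blockLE le0 u v' := by
  obtain ⟨hred, ⟨x, hxv, hmux⟩, hnmv⟩ := hbar
  have htrans := hpo.trans
  -- mu is below every element of v'
  have hmuv' : ∀ y ∈ v', le0 mu y := fun y hy => htrans _ _ _ hmux (hsucc x hxv y hy)
  -- min v' is not below mu
  have hnmv' : ¬ le0 mv' mu := fun h =>
    hnmv (htrans _ _ _ (hsucc mv hmv.1 mv' hmv'.1) h)
  obtain ⟨y, hy⟩ := hv'
  have hcomp : ∃ a ∈ u, ∃ b ∈ v', le0 a b ∨ le0 b a :=
    ⟨mu, hmu.1, y, hy, Or.inl (hmuv' y hy)⟩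
  by_contra hBL
  exact hnot ⟨⟨hBL, fun h => hnmv' (h mv' hmv'.1 mu hmu.1), hcomp⟩,
    ⟨y, hy, hmuv' y hy⟩, hnmv'⟩
end
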